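/- arXiv:2404.10298 — 2 statements merged into one kernel-verified Lean document; each statement's English description precedes it below -/
import Mathlib

section
/- Let a, b, c > 0 and let ψ ≤ N with ψ > 0, β > 0, α > 0, n ≥ 1. Suppose that at a point the inequality n·α·f·K^α ≥ β·v + α·f·K^α·H·ψ·v holds, where f ≥ m > 0, f ≤ M, v ≥ 1, K > 0, H ≥ n·K^{1/n}, β ≤ N, ψ ≤ N. Then ψ·v ≤ N·β^{-1}·n·α·max(M, 1). -/
/-!
Dividing the hypothesis by `f K^α` gives `β v K^{-α} / f + α H ψ v ≤ nα`. Since `fψ ≤ N max(M,1)`,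
`β ≤ N max(M,1)` and `H ≥ n K^{1/n}`, its left side is at least
`β ψ v (K^{-α} + nα K^{1/n}) / (N max(M,1))`, and the bracket is at least `1` by Young's inequality.
-/

/-- Weighted AM-GM for `K^{-a}` and `K^b` with weights `b/(a+b)` and `a/(a+b)`, chosen so that the
geometric mean is `K^0 = 1`. -/
theorem Real.one_add_div_le_rpow_neg_add_div_mul_rpow {a b K : ℝ} (ha : 0 < a) (hb : 0 < b)
    (hK : 0 < K) : 1 + a / b ≤ K ^ (-a) + a / b * K ^ b := by
  have hab : 0 < a + b := by positivity
  have hgm := Real.geom_mean_le_arith_mean2_weighted (w₁ := b / (a + b)) (w₂ := a / (a + b))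
    (by positivity) (by positivity) (Real.rpow_nonneg hK.le (-a)) (Real.rpow_nonneg hK.le b)
    (by field_simp; ring)
  have hone : (K ^ (-a)) ^ (b / (a + b)) * (K ^ b) ^ (a / (a + b)) = 1 := by
    rw [← Real.rpow_mul hK.le, ← Real.rpow_mul hK.le, ← Real.rpow_add hK,
      show -a * (b / (a + b)) + b * (a / (a + b)) = 0 by ring, Real.rpow_zero]
  rw [hone] at hgm
  calc 1 + a / b = (a + b) / b * 1 := by field_simp; ring
    _ ≤ (a + b) / b * (b / (a + b) * K ^ (-a) + a / (a + b) * K ^ b) := by gcongr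
    _ = K ^ (-a) + a / b * K ^ b := by field_simp

theorem Real.one_le_rpow_neg_add_mul_rpow_one_div {n α K : ℝ} (hn : 0 < n) (hα : 0 < α)
    (hK : 0 < K) : 1 ≤ K ^ (-α) + n * α * K ^ (1 / n) := by
  have := Real.one_add_div_le_rpow_neg_add_div_mul_rpow hα (one_div_pos.2 hn) hK
  rw [show α / (1 / n) = n * α by field_simp] at this
  linarith [mul_pos hn hα]

theorem gradient_estimate_core (n : ℕ) (hn : 1 ≤ n)
    (α β N m M v ψ f K H : ℝ)
    (hα : 0 < α) (hβ : 0 < β) (hβN : β ≤ N)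
    (hψ : 0 < ψ) (hψN : ψ ≤ N)
    (hm : 0 < m) (hmf : m ≤ f) (hfM : f ≤ M)
    (hv : 1 ≤ v) (hK : 0 < K)
    (hH : (n : ℝ) * K ^ ((1 : ℝ) / n) ≤ H)
    (hineq : (n : ℝ) * α * f * K ^ α ≥ β * v + α * f * K ^ α * H * ψ * v) :
    ψ * v ≤ N * β⁻¹ * n * α * max M 1 := by
  have hf : 0 < f := hm.trans_le hmf
  have hN : 0 < N := hβ.trans_le hβN
  set L := N * max M 1 with hL
  have hβL : β ≤ L := hβN.trans (le_mul_of_one_le_right hN.le (le_max_right M 1))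
  have hψL : ψ ≤ L / f := by
    rw [le_div_iff₀ hf, mul_comm, hL, mul_comm N]
    exact mul_le_mul (hfM.trans (le_max_left M 1)) hψN hψ.le (by positivity)
  have hscaled : β * v / (f * K ^ α) + α * H * ψ * v ≤ n * α := by
    rw [div_add' _ _ _ (by positivity), div_le_iff₀ (by positivity)]
    linarith
  have hyoung := Real.one_le_rpow_neg_add_mul_rpow_one_div (Nat.cast_pos.2 hn) hα hK
  have hkey : β * (ψ * v) ≤ L * (n * α) :=
    calc β * (ψ * v) ≤ β * (ψ * v) * (K ^ (-α) + n * α * K ^ ((1 : ℝ) / n)) :=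
          le_mul_of_one_le_right (by positivity) hyoung
      _ = β * v * K ^ (-α) * ψ + β * (α * ψ * v * (n * K ^ ((1 : ℝ) / n))) := by ring
      _ ≤ β * v * K ^ (-α) * (L / f) + L * (α * ψ * v * H) := by gcongr
      _ = L * (β * v / (f * K ^ α) + α * H * ψ * v) := by
          rw [Real.rpow_neg hK.le]
          field_simp
      _ ≤ L * (n * α) := by gcongr
  calc ψ * v ≤ L * (n * α) / β := by rwa [le_div_iff₀ hβ, mul_comm]
    _ = N * β⁻¹ * n * α * max M 1 := by rw [hL]; field_simp
end

section
/- Suppose positive reals satisfy n²(1+α)·f·K^α·v^{-1}·ψ^{-1} ≥ nβ(1+α)α^{-1}·ψ^{-1} + α·f·K^α·H - C·f·K^α·λ₁, where v ≥ 1, 0 < ψ ≤ N, 0 < m ≤ f ≤ M, H ≥ (n-1)K^{1/(n-1)}λ₁^{-1/(n-1)}, K, λ₁ > 0, and C = nα + ((1+α)/α)·sup|∇̄ log f|² is a constant. Then (ψ^{n(1+1/α)}·λ₁^{-1}) is bounded above by a constant depending only on N, n, α, β, M, m, and sup|∇̄ log f|². -/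
set_option maxHeartbeats 1000000 in


theorem principal_curvature_lower_bound_core (n : ℕ) (hn : 2 ≤ n)
    (α β N m M L : ℝ) (hα : 0 < α) (hβ : 0 < β) (hN : 0 < N)
    (hm : 0 < m) (hmM : m ≤ M) (hL : 0 ≤ L) :
    ∃ C : ℝ, 0 < C ∧
      ∀ f K lam ψ v H : ℝ,
        0 < K → 0 < lam → 0 < ψ → ψ ≤ N → m ≤ f → f ≤ M → 1 ≤ v →
        H ≥ ((n : ℝ) - 1) * K ^ ((1 : ℝ) / ((n : ℝ) - 1)) * lam ^ (-(1 : ℝ) / ((n : ℝ) - 1)) →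
        (n : ℝ) ^ 2 * (1 + α) * f * K ^ α * v⁻¹ * ψ⁻¹
          ≥ (n : ℝ) * β * (1 + α) * α⁻¹ * ψ⁻¹ + α * f * K ^ α * H
            - ((n : ℝ) * α + ((1 + α) / α) * L) * f * K ^ α * lam →
        ψ ^ ((n : ℝ) * (1 + 1 / α)) * lam⁻¹ ≤ C := by
  have hn2 : (2:ℝ) ≤ (n:ℝ) := by exact_mod_cast hn
  set q : ℝ := (n:ℝ) - 1 with hqdef
  have hq1 : 1 ≤ q := by simp [hqdef]; linarith
  have hq0 : 0 < q := by linarith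
  have hM : 0 < M := lt_of_lt_of_le hm hmM
  set C₀ : ℝ := (n:ℝ) * α + ((1 + α) / α) * L with hC₀def
  have hC₀ : 0 < C₀ := by
    have h1 : 0 < (n:ℝ) * α := by positivity
    have h2 : 0 ≤ ((1 + α) / α) * L := by positivity
    simp only [hC₀def]; linarith
  set A : ℝ := (n:ℝ) ^ 2 * (1 + α) * M + C₀ * M * N with hAdef
  have hA : 0 < A := by
    have h1 : 0 < (n:ℝ) ^ 2 * (1 + α) * M := by positivity
    have h2 : 0 < C₀ * M * N := by positivity
    simp only [hAdef]; linarith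
  set c₁ : ℝ := ((n:ℝ) * β * (1 + α) * α⁻¹) / A with hc₁def
  have hc₁ : 0 < c₁ := by
    have hnum : 0 < (n:ℝ) * β * (1 + α) * α⁻¹ := by positivity
    exact div_pos hnum hA
  set K₁ : ℝ := c₁ ^ (1 / (α * q)) with hK₁def
  have hK₁ : 0 < K₁ := Real.rpow_pos_of_pos hc₁ _
  set D : ℝ := α * m * q * K₁ with hDdef
  have hD : 0 < D := by positivity
  set B : ℝ := A / D with hBdef
  have hB : 0 < B := div_pos hA hD
  set p : ℝ := (n:ℝ) * (1 + 1 / α) with hpdef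
  have hp : 0 < p := by positivity
  have hqp : q ≤ p := by
    have h1α : 0 < (n:ℝ) * (1 / α) := by positivity
    simp only [hpdef, hqdef]; nlinarith
  clear_value q C₀ A c₁ K₁ D B p
  refine ⟨max (N ^ p) (B ^ p), lt_max_of_lt_left (Real.rpow_pos_of_pos hN p), ?_⟩
  intro f K lam ψ v H hK0 hlam0 hψ0 hψN hmf hfM hv hH hmain
  have hf0 : 0 < f := lt_of_lt_of_le hm hmf
  rcases le_or_gt 1 lam with hl1 | hl1
  · -- lam ≥ 1 : easy case
    have h1 : ψ ^ p ≤ N ^ p := Real.rpow_le_rpow hψ0.le hψN hp.le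
    have h2 : lam⁻¹ ≤ 1 := inv_le_one_of_one_le₀ hl1
    have : ψ ^ p * lam⁻¹ ≤ N ^ p * 1 :=
      mul_le_mul h1 h2 (inv_nonneg.mpr hlam0.le) (Real.rpow_nonneg hN.le p)
    calc ψ ^ p * lam⁻¹ ≤ N ^ p * 1 := this
      _ = N ^ p := mul_one _
      _ ≤ max (N ^ p) (B ^ p) := le_max_left _ _
  · -- lam < 1 : main case
    set G : ℝ := K ^ α with hGdef
    have hG : 0 < G := Real.rpow_pos_of_pos hK0 α
    set W : ℝ := q * K ^ ((1:ℝ)/q) * lam ^ (-(1:ℝ)/q) with hWdef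
    have hW : 0 < W := by
      rw [hWdef]
      have := Real.rpow_pos_of_pos hK0 ((1:ℝ)/q)
      have := Real.rpow_pos_of_pos hlam0 ((-(1:ℝ))/q)
      positivity
    clear_value G W
    have e : ψ⁻¹ * ψ = 1 := inv_mul_cancel₀ hψ0.ne'
    have h1 : ((n:ℝ) * β * (1 + α) * α⁻¹ * ψ⁻¹ + α * f * G * H - C₀ * f * G * lam) * ψ
        ≤ ((n:ℝ) ^ 2 * (1 + α) * f * G * v⁻¹ * ψ⁻¹) * ψ :=
      mul_le_mul_of_nonneg_right hmain hψ0.le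
    have h2 : (n:ℝ) * β * (1 + α) * α⁻¹ + α * f * G * H * ψ - C₀ * f * G * lam * ψ
        ≤ (n:ℝ) ^ 2 * (1 + α) * f * G * v⁻¹ := by
      have l1 : ((n:ℝ) * β * (1 + α) * α⁻¹ * ψ⁻¹ + α * f * G * H - C₀ * f * G * lam) * ψ
          = (n:ℝ) * β * (1 + α) * α⁻¹ * (ψ⁻¹ * ψ) + α * f * G * H * ψ
            - C₀ * f * G * lam * ψ := by ring
      have l2 : ((n:ℝ) ^ 2 * (1 + α) * f * G * v⁻¹ * ψ⁻¹) * ψ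
          = (n:ℝ) ^ 2 * (1 + α) * f * G * v⁻¹ * (ψ⁻¹ * ψ) := by ring
      rw [l1, l2, e, mul_one, mul_one] at h1
      exact h1
    have hv' : v⁻¹ ≤ 1 := inv_le_one_of_one_le₀ hv
    have h3 : (n:ℝ) ^ 2 * (1 + α) * f * G * v⁻¹ ≤ (n:ℝ) ^ 2 * (1 + α) * M * G * 1 := by
      gcongr
    have h4 : C₀ * f * G * lam * ψ ≤ C₀ * M * G * N := by
      have : C₀ * f * G * lam * ψ = C₀ * f * G * (lam * ψ) := by ring
      rw [this]
      have hlψ : lam * ψ ≤ 1 * N := mul_le_mul hl1.le hψN hψ0.le zero_le_one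
      calc C₀ * f * G * (lam * ψ) ≤ C₀ * M * G * (1 * N) := by gcongr
        _ = C₀ * M * G * N := by ring
    have h5 : α * m * G * W * ψ ≤ α * f * G * H * ψ := by
      gcongr
    have h6 : (n:ℝ) * β * (1 + α) * α⁻¹ + α * m * G * W * ψ ≤ A * G := by
      have hAG : A * G = (n:ℝ) ^ 2 * (1 + α) * M * G * 1 + C₀ * M * G * N := by
        simp only [hAdef]; ring
      linarith [hAG, h2, h3, h4, h5]
    have hβpos : 0 < (n:ℝ) * β * (1 + α) * α⁻¹ := by positivity
    -- lower bound on G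
    have hGlb : c₁ ≤ G := by
      have hWψ : 0 < α * m * G * W * ψ := by positivity
      rw [hc₁def, div_le_iff₀ hA]
      linarith [h6, hWψ]
    -- bound on the W-term
    have h7 : α * m * W * ψ ≤ A := by
      have h6' : (α * m * W * ψ) * G ≤ A * G := by linarith [h6, hβpos]
      exact le_of_mul_le_mul_right h6' hG
    -- K^(1/q) ≥ K₁
    have e2 : G ^ (1 / (α * q)) = K ^ ((1:ℝ)/q) := by
      rw [hGdef, ← Real.rpow_mul hK0.le]
      congr 1
      field_simp
    have hKq : K₁ ≤ K ^ ((1:ℝ)/q) := by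
      rw [← e2, hK₁def]
      exact Real.rpow_le_rpow hc₁.le hGlb (by positivity)
    set Lq : ℝ := lam ^ ((1:ℝ)/q) with hLqdef
    have hLq : 0 < Lq := Real.rpow_pos_of_pos hlam0 _
    clear_value Lq
    have eneg : lam ^ (-(1:ℝ)/q) = Lq⁻¹ := by
      rw [hLqdef, neg_div, Real.rpow_neg hlam0.le]
    have h8 : D * Lq⁻¹ * ψ ≤ A := by
      refine le_trans ?_ h7
      rw [hDdef, hWdef, eneg]
      have hLqi : 0 < Lq⁻¹ := inv_pos.mpr hLq
      calc α * m * q * K₁ * Lq⁻¹ * ψ = α * m * (q * K₁ * Lq⁻¹) * ψ := by ring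
        _ ≤ α * m * (q * (K ^ ((1:ℝ)/q)) * Lq⁻¹) * ψ := by gcongr
        _ = α * m * (q * K ^ ((1:ℝ)/q) * Lq⁻¹) * ψ := by ring
    have hψB : ψ ≤ B * Lq := by
      have h9 : (D * Lq⁻¹ * ψ) * Lq ≤ A * Lq := mul_le_mul_of_nonneg_right h8 hLq.le
      have eL : Lq⁻¹ * Lq = 1 := inv_mul_cancel₀ hLq.ne'
      have l3 : (D * Lq⁻¹ * ψ) * Lq = D * ψ * (Lq⁻¹ * Lq) := by ring
      rw [l3, eL, mul_one] at h9
      rw [hBdef, div_mul_eq_mul_div, le_div_iff₀ hD]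
      linarith [h9]
    have hψp : ψ ^ p ≤ B ^ p * lam ^ (p / q) := by
      have h10 : ψ ^ p ≤ (B * Lq) ^ p := Real.rpow_le_rpow hψ0.le hψB hp.le
      have h11 : (B * Lq) ^ p = B ^ p * Lq ^ p := Real.mul_rpow hB.le hLq.le
      have h12 : Lq ^ p = lam ^ (p / q) := by
        rw [hLqdef, ← Real.rpow_mul hlam0.le]
        congr 1
        ring
      rw [h11, h12] at h10
      exact h10
    have hfin : B ^ p * lam ^ (p / q) * lam⁻¹ ≤ B ^ p := by
      have e3 : lam ^ (p / q) * lam⁻¹ = lam ^ (p / q - 1) := by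
        rw [show lam⁻¹ = lam ^ (-(1:ℝ)) by rw [Real.rpow_neg_one],
          ← Real.rpow_add hlam0]
        ring_nf
      have h13 : lam ^ (p / q - 1) ≤ 1 := by
        apply Real.rpow_le_one hlam0.le hl1.le
        have : 1 ≤ p / q := (one_le_div hq0).mpr hqp
        linarith
      calc B ^ p * lam ^ (p / q) * lam⁻¹ = B ^ p * (lam ^ (p / q) * lam⁻¹) := by ring
        _ = B ^ p * lam ^ (p / q - 1) := by rw [e3]
        _ ≤ B ^ p * 1 := mul_le_mul_of_nonneg_left h13 (Real.rpow_nonneg hB.le p)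
        _ = B ^ p := mul_one _
    calc ψ ^ p * lam⁻¹ ≤ B ^ p * lam ^ (p / q) * lam⁻¹ :=
          mul_le_mul_of_nonneg_right hψp (inv_nonneg.mpr hlam0.le)
      _ ≤ B ^ p := hfin
      _ ≤ max (N ^ p) (B ^ p) := le_max_right _ _
end
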